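/- For all N ∈ ℕ and 2 ≤ k ≤ N, define ω_{N,k}(q) = Σ_{m=k}^{N} (-1)^{m-1} binom_q(N,m) · ((q²;q²)_m/(q²;q²)_{m-k}) · q^{(1-N)m}. Then ω_{N,k}(q) = 0 if k ≠ N, and ω_{N,N}(q) = (-1)^{N-1}(q²;q²)_N q^{(1-N)N}. -/

import Mathlib

/-!
Write `t = q²`. The balanced binomial `[N, m]_q` is `q^(-m(N-m))` times the Gaussian binomial
`[N, m]_t`, and `[N, m]_t (t;t)_m / (t;t)_(m-k) = (t;t)_N / (t;t)_(N-k) · [N-k, m-k]_t`. Putting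
`m = k + j`, the summands of `ω_{N,k}` become, up to a common factor, the terms
`(-1)^j t^(j choose 2) x^j [N-k, j]_t` of the q-binomial theorem for `∏_{i<N-k} (1 - x t^i)`
with `x = t^(-(N-k-1))`, whose last factor vanishes. For `k = N` only the term `m = N` is left.
-/

open Finset

noncomputable section

/-- The indeterminate `q` in `ℚ(q)`. -/
def q : RatFunc ℚ := RatFunc.X

/-- The balanced quantum integer `[m]_q = (q^m - q^{-m})/(q - q^{-1})`. -/
def qnum (m : ℕ) : RatFunc ℚ := (q ^ (m : ℤ) - q ^ (-(m : ℤ))) / (q - q⁻¹)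

/-- The balanced quantum factorial `[m]_q!`. -/
def qfact : ℕ → RatFunc ℚ
  | 0 => 1
  | n + 1 => qfact n * qnum (n + 1)

/-- The balanced Gaussian binomial coefficient. -/
def qbinom (n k : ℕ) : RatFunc ℚ := qfact n / (qfact k * qfact (n - k))

/-- The q-Pochhammer symbol `(q²;q²)_m = Π_{j=1}^m (1 - q^{2j})`. -/
def poch2 (m : ℕ) : RatFunc ℚ := ∏ j ∈ Icc 1 m, (1 - q ^ (2 * j))

/-- `ω_{N,k}(q) = Σ_{m=k}^{N} (-1)^{m-1} [N choose m]_q ((q²;q²)_m/(q²;q²)_{m-k}) q^{(1-N)m}`. -/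
def omegaNk (N k : ℕ) : RatFunc ℚ :=
  ∑ m ∈ Icc k N,
    (-1 : RatFunc ℚ) ^ (m - 1) * qbinom N m * (poch2 m / poch2 (m - k)) *
      q ^ ((1 - (N : ℤ)) * m)

section GaussianBinomial

variable {R : Type*} [CommRing R] (t : R)

def qPochhammer (m : ℕ) : R := ∏ j ∈ Icc 1 m, (1 - t ^ j)

def gaussBinom : ℕ → ℕ → R
  | _, 0 => 1
  | 0, _ + 1 => 0
  | n + 1, j + 1 => gaussBinom n j + t ^ (j + 1) * gaussBinom n (j + 1)

@[simp]
lemma qPochhammer_zero : qPochhammer t 0 = 1 := by simp [qPochhammer]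

lemma qPochhammer_succ (m : ℕ) : qPochhammer t (m + 1) = qPochhammer t m * (1 - t ^ (m + 1)) :=
  prod_Icc_succ_top (by omega) _

@[simp]
lemma gaussBinom_zero_right (n : ℕ) : gaussBinom t n 0 = 1 := by cases n <;> rfl

lemma gaussBinom_succ_succ (n j : ℕ) :
    gaussBinom t (n + 1) (j + 1) = gaussBinom t n j + t ^ (j + 1) * gaussBinom t n (j + 1) := rfl

lemma gaussBinom_eq_zero_of_lt {n j : ℕ} (h : n < j) : gaussBinom t n j = 0 := by
  induction n generalizing j with
  | zero => obtain ⟨j, rfl⟩ := Nat.exists_eq_add_one_of_ne_zero h.ne'; rfl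
  | succ n ih =>
    obtain ⟨j, rfl⟩ := Nat.exists_eq_add_one_of_ne_zero (by omega : j ≠ 0)
    rw [gaussBinom_succ_succ, ih (by omega), ih (by omega), mul_zero, add_zero]

@[simp]
lemma gaussBinom_self (n : ℕ) : gaussBinom t n n = 1 := by
  induction n with
  | zero => rfl
  | succ n ih =>
    rw [gaussBinom_succ_succ, ih, gaussBinom_eq_zero_of_lt t (lt_add_one n), mul_zero, add_zero]

lemma gaussBinom_mul_qPochhammer {n j : ℕ} (h : j ≤ n) :
    gaussBinom t n j * qPochhammer t j * qPochhammer t (n - j) = qPochhammer t n := by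
  induction n generalizing j with
  | zero =>
    obtain rfl : j = 0 := by omega
    simp
  | succ n ih =>
    rcases j with _ | j
    · simp
    rcases h.eq_or_lt with heq | hlt
    · obtain rfl : j = n := by omega
      simp
    have hsub : n - j = n - (j + 1) + 1 := by omega
    have hpow : t ^ (n + 1) = t ^ (j + 1) * t ^ (n - j) := by rw [← pow_add]; congr 1; omega
    have h1 := ih (j := j) (by omega)
    have h2 := ih (j := j + 1) (by omega)
    rw [hsub, qPochhammer_succ, ← hsub] at h1
    rw [qPochhammer_succ] at h2
    rw [gaussBinom_succ_succ, qPochhammer_succ t j, qPochhammer_succ t n, Nat.add_sub_add_right,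
      hsub, qPochhammer_succ, ← hsub, hpow]
    linear_combination (1 - t ^ (j + 1)) * h1 + t ^ (j + 1) * (1 - t ^ (n - j)) * h2

theorem prod_one_sub_mul_pow_eq_sum (n : ℕ) (x : R) :
    ∏ i ∈ range n, (1 - x * t ^ i) =
      ∑ j ∈ range (n + 1), (-1) ^ j * t ^ j.choose 2 * x ^ j * gaussBinom t n j := by
  induction n generalizing x with
  | zero => simp
  | succ n ih =>
    -- Both halves of the Pascal recursion for `gaussBinom t (n + 1)` re-expand to the sum at
    -- `x * t` (times `-x` and `1`), matching `∏ (1 - x t^i) = (1 - x) ∏ (1 - (x t) t^i)`.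
    have hchoose (j : ℕ) : (j + 1).choose 2 = j.choose 2 + j := by
      rw [Nat.choose_succ_succ', Nat.choose_one_right, add_comm]
    have hlow : ∑ j ∈ range (n + 1), (-1) ^ (j + 1) * t ^ (j + 1).choose 2 * x ^ (j + 1) *
          gaussBinom t n j =
        -x * ∑ j ∈ range (n + 1),
          (-1) ^ j * t ^ j.choose 2 * (x * t) ^ j * gaussBinom t n j := by
      rw [mul_sum]
      refine sum_congr rfl fun j _ => ?_
      rw [hchoose]
      ring
    have hhigh :
        ∑ j ∈ range (n + 1), (-1) ^ j * t ^ j.choose 2 * (x * t) ^ j * gaussBinom t n j =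
        ∑ j ∈ range (n + 1), (-1) ^ (j + 1) * t ^ (j + 1).choose 2 * x ^ (j + 1) *
          (t ^ (j + 1) * gaussBinom t n (j + 1)) + 1 := by
      -- pad with the vanishing term `j = n + 1`, then split off `j = 0`
      rw [← add_zero (∑ j ∈ range (n + 1), _),
        ← mul_zero ((-1) ^ (n + 1) * t ^ (n + 1).choose 2 * (x * t) ^ (n + 1)),
        ← gaussBinom_eq_zero_of_lt t (lt_add_one n), ← sum_range_succ, sum_range_succ']
      congr 1
      · exact sum_congr rfl fun j _ => by ring
      · simp
    have hprod : ∏ i ∈ range (n + 1), (1 - x * t ^ i) =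
        (1 - x) * ∏ i ∈ range n, (1 - x * t * t ^ i) := by
      rw [prod_range_succ', mul_comm]
      simp only [pow_succ', pow_zero, mul_assoc, mul_one]
    rw [hprod, ih, sum_range_succ' _ (n + 1)]
    simp only [gaussBinom_succ_succ, mul_add, sum_add_distrib, gaussBinom_zero_right,
      Nat.choose_zero_succ, pow_zero]
    rw [hlow, hhigh]
    ring

end GaussianBinomial

lemma q_ne_zero : q ≠ 0 := RatFunc.X_ne_zero

lemma q_pow_ne_one {n : ℕ} (hn : n ≠ 0) : q ^ n ≠ 1 := by
  intro h
  have h' : algebraMap (Polynomial ℚ) (RatFunc ℚ) (Polynomial.X ^ n) =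
      algebraMap (Polynomial ℚ) (RatFunc ℚ) 1 := by
    simpa [q, RatFunc.algebraMap_X] using h
  simpa [hn] using congrArg Polynomial.natDegree (RatFunc.algebraMap_injective ℚ h')

lemma poch2_eq_qPochhammer (m : ℕ) : poch2 m = qPochhammer (q ^ 2) m := by
  simp [poch2, qPochhammer, pow_mul]

lemma qPochhammer_q_sq_ne_zero (m : ℕ) : qPochhammer (q ^ 2) m ≠ 0 :=
  prod_ne_zero_iff.2 fun j hj => sub_ne_zero.2 fun h =>
    q_pow_ne_one (n := 2 * j) (by simp at hj; omega) (by rw [pow_mul]; exact h.symm)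

lemma qnum_succ_mul (m : ℕ) : qnum (m + 1) * (1 - q ^ 2) * q ^ m = 1 - (q ^ 2) ^ (m + 1) := by
  have hq := q_ne_zero
  have hq2 : q ^ 2 - 1 ≠ 0 := sub_ne_zero.2 (q_pow_ne_one two_ne_zero)
  rw [qnum, zpow_neg, zpow_natCast]
  field_simp
  ring

lemma qfact_mul (m : ℕ) : qfact m * (1 - q ^ 2) ^ m * q ^ m.choose 2 = qPochhammer (q ^ 2) m := by
  induction m with
  | zero => simp [qfact]
  | succ m ih =>
    rw [qPochhammer_succ, ← ih, ← qnum_succ_mul, qfact, Nat.choose_succ_succ',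
      Nat.choose_one_right]
    ring

lemma qfact_ne_zero (m : ℕ) : qfact m ≠ 0 :=
  left_ne_zero_of_mul <| left_ne_zero_of_mul <| by rw [qfact_mul]; exact qPochhammer_q_sq_ne_zero m

lemma add_choose_two (a b : ℕ) : (a + b).choose 2 = a.choose 2 + b.choose 2 + a * b := by
  have h : ((a + b).choose 2 : ℚ) = a.choose 2 + b.choose 2 + a * b := by
    simp only [Nat.cast_choose_two, Nat.cast_add]
    ring
  exact_mod_cast h

lemma qbinom_mul_pow {N m : ℕ} (h : m ≤ N) :
    qbinom N m * q ^ (m * (N - m)) = gaussBinom (q ^ 2) N m := by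
  obtain ⟨a, rfl⟩ := Nat.exists_eq_add_of_le h
  have hG := gaussBinom_mul_qPochhammer (q ^ 2) h
  rw [Nat.add_sub_cancel_left, ← qfact_mul, ← qfact_mul, ← qfact_mul, add_choose_two] at hG
  have hu : (1 - q ^ 2 : RatFunc ℚ) ≠ 0 := sub_ne_zero.2 (q_pow_ne_one two_ne_zero).symm
  rw [qbinom, Nat.add_sub_cancel_left, div_mul_eq_mul_div,
    div_eq_iff (mul_ne_zero (qfact_ne_zero m) (qfact_ne_zero a))]
  apply mul_right_cancel₀ (mul_ne_zero (pow_ne_zero (m + a) hu)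
    (pow_ne_zero (m.choose 2 + a.choose 2) q_ne_zero))
  linear_combination -hG

lemma qbinom_mul_poch2_div_poch2 {n j : ℕ} (k : ℕ) (h : j ≤ n) :
    qbinom (k + n) (k + j) * (poch2 (k + j) / poch2 j) * q ^ ((k + j) * (n - j)) =
      poch2 (k + n) / poch2 n * gaussBinom (q ^ 2) n j := by
  have h1 := gaussBinom_mul_qPochhammer (q ^ 2) (Nat.add_le_add_left h k)
  have h2 := gaussBinom_mul_qPochhammer (q ^ 2) h
  rw [Nat.add_sub_add_left] at h1
  rw [← Nat.add_sub_add_left k n j, mul_right_comm, qbinom_mul_pow (by omega)]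
  simp only [poch2_eq_qPochhammer]
  rw [mul_div_assoc', div_mul_eq_mul_div,
    div_eq_div_iff (qPochhammer_q_sq_ne_zero j) (qPochhammer_q_sq_ne_zero n)]
  apply mul_left_cancel₀ (qPochhammer_q_sq_ne_zero (n - j))
  linear_combination qPochhammer (q ^ 2) n * h1 - qPochhammer (q ^ 2) (k + n) * h2

lemma omegaNk_summand_eq {k n j : ℕ} (hk : 0 < k) (hj : j ≤ n + 1) :
    (-1 : RatFunc ℚ) ^ (k + j - 1) * qbinom (k + (n + 1)) (k + j) *
        (poch2 (k + j) / poch2 (k + j - k)) *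
        q ^ ((1 - ((k + (n + 1) : ℕ) : ℤ)) * ((k + j : ℕ) : ℤ)) =
      (-1) ^ (k - 1) * (poch2 (k + (n + 1)) / poch2 (n + 1)) *
        q ^ (-((k * (k + 2 * n + 1) : ℕ) : ℤ)) *
        ((-1) ^ j * (q ^ 2) ^ j.choose 2 * ((q ^ 2) ^ n)⁻¹ ^ j *
          gaussBinom (q ^ 2) (n + 1) j) := by
  have hsign : (-1 : RatFunc ℚ) ^ (k + j - 1) = (-1) ^ (k - 1) * (-1) ^ j := by
    rw [← pow_add, Nat.sub_add_comm hk]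
  have hpow : q ^ ((1 - ((k + (n + 1) : ℕ) : ℤ)) * ((k + j : ℕ) : ℤ)) =
      q ^ (-((k * (k + 2 * n + 1) : ℕ) : ℤ)) * (q ^ 2) ^ j.choose 2 * ((q ^ 2) ^ n)⁻¹ ^ j *
        q ^ ((k + j) * (n + 1 - j)) := by
    have hC : (2 * j.choose 2 + j : ℤ) = j * j := by
      have h : (2 * j.choose 2 + j : ℚ) = j * j := by rw [Nat.cast_choose_two]; ring
      exact_mod_cast h
    simp only [inv_pow, ← pow_mul]
    simp only [← zpow_natCast, ← zpow_neg, ← zpow_add₀ q_ne_zero]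
    congr 1
    push_cast [Nat.cast_sub hj]
    linear_combination -hC
  rw [hsign, hpow, Nat.add_sub_cancel_left]
  linear_combination (-1) ^ (k - 1) * (-1) ^ j * q ^ (-((k * (k + 2 * n + 1) : ℕ) : ℤ)) *
    (q ^ 2) ^ j.choose 2 * ((q ^ 2) ^ n)⁻¹ ^ j * qbinom_mul_poch2_div_poch2 k hj

theorem omegaNk_eq_zero_of_lt {N k : ℕ} (hk : 0 < k) (hkN : k < N) : omegaNk N k = 0 := by
  obtain ⟨n, rfl⟩ : ∃ n, N = k + (n + 1) := ⟨N - k - 1, by omega⟩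
  have hvanish : ∏ i ∈ range (n + 1), (1 - ((q ^ 2) ^ n)⁻¹ * (q ^ 2) ^ i) = 0 :=
    prod_eq_zero (mem_range.2 (lt_add_one n)) <| by
      rw [inv_mul_cancel₀ (pow_ne_zero n (pow_ne_zero 2 q_ne_zero)), sub_self]
  rw [omegaNk, ← Ico_add_one_right_eq_Icc, sum_Ico_eq_sum_range,
    show k + (n + 1) + 1 - k = n + 1 + 1 by omega,
    sum_congr rfl fun j hj => omegaNk_summand_eq hk (Nat.lt_succ_iff.1 (mem_range.1 hj)),
    ← mul_sum, ← prod_one_sub_mul_pow_eq_sum, hvanish, mul_zero]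

lemma qbinom_self (n : ℕ) : qbinom n n = 1 := by
  rw [qbinom, Nat.sub_self, qfact, mul_one, div_self (qfact_ne_zero n)]

lemma omegaNk_self (N : ℕ) :
    omegaNk N N = (-1 : RatFunc ℚ) ^ (N - 1) * poch2 N * q ^ ((1 - (N : ℤ)) * N) := by
  rw [omegaNk, Icc_self, sum_singleton, qbinom_self, Nat.sub_self, poch2_eq_qPochhammer 0,
    qPochhammer_zero, div_one, mul_one]

theorem stmt15_general (N k : ℕ) (hk : 2 ≤ k) :
    (k ≠ N → omegaNk N k = 0) ∧
    (k = N → omegaNk N k =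
      (-1 : RatFunc ℚ) ^ (N - 1) * poch2 N * q ^ ((1 - (N : ℤ)) * N)) := by
  refine ⟨fun hne => ?_, fun heq => heq ▸ omegaNk_self N⟩
  rcases hne.lt_or_gt with hlt | hgt
  · exact omegaNk_eq_zero_of_lt (by omega) hlt
  · rw [omegaNk, Icc_eq_empty_of_lt hgt, sum_empty]

/-- for `2 ≤ k ≤ N`, `ω_{N,k}(q) = 0` if `k ≠ N` and
`ω_{N,N}(q) = (-1)^{N-1}(q²;q²)_N q^{(1-N)N}`. -/
theorem stmt15 (N k : ℕ) (hk : 2 ≤ k) (hkN : k ≤ N) :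
    (k ≠ N → omegaNk N k = 0) ∧
    (k = N → omegaNk N k =
      (-1 : RatFunc ℚ) ^ (N - 1) * poch2 N * q ^ ((1 - (N : ℤ)) * N)) :=
  stmt15_general N k hk
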